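/- arXiv:math/0611133 — 5 statements merged into one kernel-verified Lean document; each statement's English description precedes it below -/
import Mathlib

section
/- Let g : X → {-1,+1} be a classifier of the form g = 2·1_C − 1 for a measurable set C ⊆ X with μ(C) = u₀, and let g*_{u₀} = 2·1_{C*_{u₀}} − 1 where C*_{u₀} = {x : η(x) ≥ Q(η, 1−u₀)}. Then L(g*_{u₀}) ≤ L(g), i.e. the classifier based on the set of best instances minimizes the classification error among all classifiers satisfying the mass constraint P(g(X)=1) = u₀. -/
/-! Writing `μ` for the law of `X`, the error of the classifier built from `C` is
`P(Y = 1) + μ(C) - 2 ∫_C η dμ`, so under the mass constraint minimizing the error means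
maximizing `∫_C η dμ`. A superlevel set `S = {η ≥ q}` does this (bathtub principle): pointwise
`1_C (η - q) ≤ 1_S (η - q)`, and `C` and `S` have the same mass. -/

open MeasureTheory Set

namespace LocalRanking

variable {Ω 𝒳 : Type*} [MeasurableSpace Ω] [MeasurableSpace 𝒳]

/-- The generalized-inverse `v`-quantile of a distribution `μ` on `ℝ`:
`Q(μ, v) = inf {t : F(t) ≥ v}`. -/
noncomputable def quantile (μ : Measure ℝ) (v : ℝ) : ℝ :=
  sInf {t : ℝ | v ≤ (μ (Iic t)).toReal}

/-- Classification error `P(Y ≠ g(X))` of the classifier `g = 2·1_C − 1` built from a set `C`. -/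
noncomputable def errSet (P : Measure Ω) (X : Ω → 𝒳) (Y : Ω → ℝ) (C : Set 𝒳) : ℝ :=
  (P {ω | (Y ω = 1 ∧ X ω ∉ C) ∨ (Y ω = -1 ∧ X ω ∈ C)}).toReal

open scoped symmDiff

theorem indicator_sub_le_indicator_superlevel {α : Type*} (C : Set α) (f : α → ℝ) (q x) :
    C.indicator (fun x => f x - q) x ≤ {x | q ≤ f x}.indicator (fun x => f x - q) x := by
  by_cases hC : x ∈ C <;> by_cases hS : q ≤ f x <;> simp [hC, hS]; linarith

section

variable {α : Type*} [MeasurableSpace α] {μ : Measure α} [IsFiniteMeasure μ]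

theorem measureReal_symmDiff_eq_add_sub_inter {s t : Set α} (hs : MeasurableSet s)
    (ht : MeasurableSet t) :
    μ.real (s ∆ t) = μ.real s + μ.real t - 2 * μ.real (s ∩ t) := by
  have hs' : μ.real (s ∩ t) + μ.real (s \ t) = μ.real s := measureReal_inter_add_sdiff ht
  have ht' : μ.real (t ∩ s) + μ.real (t \ s) = μ.real t := measureReal_inter_add_sdiff hs
  rw [measureReal_symmDiff_eq hs ht]
  rw [inter_comm] at ht'
  linarith

theorem setIntegral_le_setIntegral_superlevel {f : α → ℝ} {q : ℝ} {C : Set α}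
    (hf : Integrable f μ) (hC : MeasurableSet C) (hS : MeasurableSet {x | q ≤ f x})
    (hmass : μ.real C = μ.real {x | q ≤ f x}) :
    ∫ x in C, f x ∂μ ≤ ∫ x in {x | q ≤ f x}, f x ∂μ := by
  have hfq : Integrable (fun x => f x - q) μ := hf.sub (integrable_const q)
  have shift : ∀ D : Set α, ∫ x in D, f x ∂μ = ∫ x in D, (f x - q) ∂μ + μ.real D * q := by
    intro D
    rw [integral_sub hf.integrableOn (integrableOn_const), setIntegral_const, smul_eq_mul]
    ring
  have centered : ∫ x in C, (f x - q) ∂μ ≤ ∫ x in {x | q ≤ f x}, (f x - q) ∂μ := by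
    rw [← integral_indicator hC, ← integral_indicator hS]
    exact integral_mono (hfq.indicator hC) (hfq.indicator hS)
      (indicator_sub_le_indicator_superlevel C f q)
  rw [shift C, shift {x | q ≤ f x}, hmass]
  linarith

end

omit [MeasurableSpace 𝒳] in
theorem errSet_eq_measureReal_symmDiff {P : Measure Ω} {X : Ω → 𝒳} {Y : Ω → ℝ}
    (hYval : ∀ ω, Y ω = 1 ∨ Y ω = -1) (D : Set 𝒳) :
    errSet P X Y D = P.real ({ω | Y ω = 1} ∆ (X ⁻¹' D)) := by
  rw [errSet, ← measureReal_def]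
  congr 1
  ext ω
  rcases hYval ω with h | h <;> norm_num [h, mem_symmDiff]

theorem errSet_eq {P : Measure Ω} [IsFiniteMeasure P] {X : Ω → 𝒳} {Y : Ω → ℝ}
    (hX : Measurable X) (hY : Measurable Y) (hYval : ∀ ω, Y ω = 1 ∨ Y ω = -1)
    {D : Set 𝒳} (hD : MeasurableSet D) :
    errSet P X Y D =
      P.real {ω | Y ω = 1} + (P.map X).real D - 2 * P.real {ω | X ω ∈ D ∧ Y ω = 1} := by
  have hY1 : MeasurableSet {ω | Y ω = 1} := hY (measurableSet_singleton 1)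
  rw [errSet_eq_measureReal_symmDiff hYval, measureReal_symmDiff_eq_add_sub_inter hY1 (hX hD),
    map_measureReal_apply hX hD, inter_comm]
  rfl

theorem best_instances_minimize_error_general
    (P : Measure Ω) [IsProbabilityMeasure P]
    (X : Ω → 𝒳) (Y : Ω → ℝ) (η : 𝒳 → ℝ)
    (hX : Measurable X) (hY : Measurable Y) (hηm : Measurable η)
    (hYval : ∀ ω, Y ω = 1 ∨ Y ω = -1)
    (hηbd : ∀ x, η x ∈ Icc (0 : ℝ) 1)
    -- η is the posterior probability: for every measurable A,
    -- P(X ∈ A, Y = 1) = ∫_A η dμ with μ the law of X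
    (hη : ∀ A : Set 𝒳, MeasurableSet A →
      (P {ω | X ω ∈ A ∧ Y ω = 1}).toReal = ∫ x in A, η x ∂(P.map X))
    (u₀ q : ℝ)
    -- no atom issue : P(η(X) ≥ q) = u₀
    (hmass_star : ((P.map X) {x | q ≤ η x}).toReal = u₀)
    (C : Set 𝒳) (hC : MeasurableSet C)
    (hmass : ((P.map X) C).toReal = u₀) :
    errSet P X Y {x | q ≤ η x} ≤ errSet P X Y C := by
  set μ := P.map X
  have hint : Integrable η μ := by
    refine .of_bound hηm.aestronglyMeasurable 1 (ae_of_all _ fun x => ?_)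
    rw [Real.norm_eq_abs, abs_le]
    exact ⟨by linarith [(hηbd x).1], (hηbd x).2⟩
  have herr : ∀ D, MeasurableSet D →
      errSet P X Y D = P.real {ω | Y ω = 1} + μ.real D - 2 * ∫ x in D, η x ∂μ := by
    intro D hD
    rw [errSet_eq hX hY hYval hD, ← hη D hD]
    rfl
  have hS : MeasurableSet {x | q ≤ η x} := measurableSet_le measurable_const hηm
  have hmass_eq : μ.real C = μ.real {x | q ≤ η x} := hmass.trans hmass_star.symm
  have hbathtub := setIntegral_le_setIntegral_superlevel hint hC hS hmass_eq
  rw [herr C hC, herr _ hS]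
  linarith

/-- Among all classifiers `g = 2·1_C − 1` satisfying the mass constraint
`μ(C) = u₀`, the classifier based on the set of best instances
`C*_{u₀} = {x : η(x) ≥ Q(η, 1−u₀)}` minimizes the classification error `L(g) = P(Y ≠ g(X))`. -/
theorem best_instances_minimize_error
    (P : Measure Ω) [IsProbabilityMeasure P]
    (X : Ω → 𝒳) (Y : Ω → ℝ) (η : 𝒳 → ℝ)
    (hX : Measurable X) (hY : Measurable Y) (hηm : Measurable η)
    (hYval : ∀ ω, Y ω = 1 ∨ Y ω = -1)
    (hηbd : ∀ x, η x ∈ Icc (0 : ℝ) 1)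
    -- η is the posterior probability: for every measurable A,
    -- P(X ∈ A, Y = 1) = ∫_A η dμ with μ the law of X
    (hη : ∀ A : Set 𝒳, MeasurableSet A →
      (P {ω | X ω ∈ A ∧ Y ω = 1}).toReal = ∫ x in A, η x ∂(P.map X))
    (u₀ q : ℝ) (hu₀ : u₀ ∈ Ioo (0 : ℝ) 1)
    -- q is the (1−u₀)-quantile of η(X)
    (hq : q = quantile (P.map fun ω => η (X ω)) (1 - u₀))
    -- no atom issue : P(η(X) ≥ q) = u₀
    (hmass_star : ((P.map X) {x | q ≤ η x}).toReal = u₀)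
    (C : Set 𝒳) (hC : MeasurableSet C)
    (hmass : ((P.map X) C).toReal = u₀) :
    errSet P X Y {x | q ≤ η x} ≤ errSet P X Y C :=
  best_instances_minimize_error_general P X Y η hX hY hηm hYval hηbd hη u₀ q hmass_star C hC hmass

end LocalRanking
end

section
/- The optimal error under the mass constraint satisfies the closed-form expression L*_{u₀} = 1 − q + (1−u₀)(2q−1) − E|η(X) − q|, where q = Q(η, 1−u₀). -/
/-!
Split the sample space along `C = {η ≥ q}`. Since `η` is the posterior of `Y = 1`, the error of
`C` is `P(X ∈ C) + ∫_{Cᶜ} η − ∫_C η`, while `|η − q|` equals `η − q` on `C` and `q − η` on `Cᶜ`,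
so `E|η(X) − q| = ∫_C η − ∫_{Cᶜ} η + q (P(X ∉ C) − P(X ∈ C))`. Eliminating the two partial
integrals with `P(X ∈ C) = u₀` gives the closed form.
-/

open MeasureTheory Set

namespace LocalRanking

variable {Ω 𝒳 : Type*} [MeasurableSpace Ω] [MeasurableSpace 𝒳]

theorem integral_abs_sub_const_eq {μ : Measure 𝒳} [IsFiniteMeasure μ] {f : 𝒳 → ℝ}
    (hfm : Measurable f) (hf : Integrable f μ) (q : ℝ) :
    ∫ x, |f x - q| ∂μ = (∫ x in {x | q ≤ f x}, f x ∂μ) - (∫ x in {x | q ≤ f x}ᶜ, f x ∂μ)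
      + q * (μ.real {x | q ≤ f x}ᶜ - μ.real {x | q ≤ f x}) := by
  set C := {x | q ≤ f x}
  have hC : MeasurableSet C := measurableSet_le measurable_const hfm
  have on_C : ∫ x in C, |f x - q| ∂μ = ∫ x in C, (f x - q) ∂μ :=
    setIntegral_congr_fun hC fun x hx => abs_of_nonneg (sub_nonneg.mpr hx)
  have on_compl : ∫ x in Cᶜ, |f x - q| ∂μ = ∫ x in Cᶜ, (q - f x) ∂μ :=
    setIntegral_congr_fun hC.compl fun x hx => by
      rw [abs_sub_comm]
      exact abs_of_nonneg (sub_nonneg.mpr (le_of_not_ge hx))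
  have h_int : Integrable (fun x => |f x - q|) μ := (hf.sub (integrable_const q)).abs
  rw [← integral_add_compl hC h_int, on_C, on_compl,
    integral_sub hf.restrict (integrable_const q), integral_sub (integrable_const q) hf.restrict,
    setIntegral_const, setIntegral_const, smul_eq_mul, smul_eq_mul]
  ring

section Classification

variable {P : Measure Ω} {X : Ω → 𝒳} {Y : Ω → ℝ} {C : Set 𝒳}

theorem errSet_eq_add [IsFiniteMeasure P] (hX : Measurable X) (hY : Measurable Y)
    (hC : MeasurableSet C) :
    errSet P X Y C = P.real {ω | Y ω = 1 ∧ X ω ∉ C} + P.real {ω | Y ω = -1 ∧ X ω ∈ C} := by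
  have hdisj : Disjoint {ω | Y ω = 1 ∧ X ω ∉ C} {ω | Y ω = -1 ∧ X ω ∈ C} := by
    rw [Set.disjoint_left]
    rintro ω ⟨h1, -⟩ ⟨h2, -⟩
    norm_num [h1] at h2
  exact measureReal_union hdisj ((hY (measurableSet_singleton (-1))).inter (hX hC))

theorem measureReal_neg_one_and_mem [IsFiniteMeasure P] (hX : Measurable X) (hY : Measurable Y)
    (hYval : ∀ ω, Y ω = 1 ∨ Y ω = -1) (hC : MeasurableSet C) :
    P.real {ω | Y ω = -1 ∧ X ω ∈ C} = (P.map X).real C - P.real {ω | X ω ∈ C ∧ Y ω = 1} := by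
  have hsplit : X ⁻¹' C = {ω | X ω ∈ C ∧ Y ω = 1} ∪ {ω | Y ω = -1 ∧ X ω ∈ C} := by
    ext ω
    rcases hYval ω with h | h <;> norm_num [h]
  have hdisj : Disjoint {ω | X ω ∈ C ∧ Y ω = 1} {ω | Y ω = -1 ∧ X ω ∈ C} := by
    rw [Set.disjoint_left]
    rintro ω ⟨-, h1⟩ ⟨h2, -⟩
    norm_num [h1] at h2
  rw [map_measureReal_apply hX hC, hsplit,
    measureReal_union hdisj ((hY (measurableSet_singleton (-1))).inter (hX hC))]
  ring

theorem errSet_eq_of_posterior [IsFiniteMeasure P] {η : 𝒳 → ℝ} (hX : Measurable X)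
    (hY : Measurable Y) (hYval : ∀ ω, Y ω = 1 ∨ Y ω = -1)
    (hη : ∀ A : Set 𝒳, MeasurableSet A →
      (P {ω | X ω ∈ A ∧ Y ω = 1}).toReal = ∫ x in A, η x ∂(P.map X))
    (hC : MeasurableSet C) :
    errSet P X Y C =
      (P.map X).real C + (∫ x in Cᶜ, η x ∂(P.map X)) - ∫ x in C, η x ∂(P.map X) := by
  have h_pos : P.real {ω | Y ω = 1 ∧ X ω ∉ C} = ∫ x in Cᶜ, η x ∂(P.map X) := by
    rw [← hη Cᶜ hC.compl]
    simp only [mem_compl_iff, and_comm]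
    rfl
  rw [errSet_eq_add hX hY hC, measureReal_neg_one_and_mem hX hY hYval hC, h_pos,
    measureReal_def, measureReal_def, hη C hC]
  ring

end Classification

theorem optimal_error_closed_form_general
    (P : Measure Ω) [IsProbabilityMeasure P]
    (X : Ω → 𝒳) (Y : Ω → ℝ) (η : 𝒳 → ℝ)
    (hX : Measurable X) (hY : Measurable Y) (hηm : Measurable η)
    (hYval : ∀ ω, Y ω = 1 ∨ Y ω = -1)
    (hηbd : ∀ x, η x ∈ Icc (0 : ℝ) 1)
    (hη : ∀ A : Set 𝒳, MeasurableSet A →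
      (P {ω | X ω ∈ A ∧ Y ω = 1}).toReal = ∫ x in A, η x ∂(P.map X))
    (u₀ q : ℝ)
    (hmass_star : ((P.map X) {x | q ≤ η x}).toReal = u₀) :
    errSet P X Y {x | q ≤ η x} =
      1 - q + (1 - u₀) * (2 * q - 1) - ∫ x, |η x - q| ∂(P.map X) := by
  have : IsProbabilityMeasure (P.map X) := Measure.isProbabilityMeasure_map hX.aemeasurable
  have hC : MeasurableSet {x | q ≤ η x} := measurableSet_le measurable_const hηm
  have hη_int : Integrable η (P.map X) :=
    (integrable_const (1 : ℝ)).mono' hηm.aestronglyMeasurable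
      (ae_of_all _ fun x => by simpa [abs_le] using ⟨by linarith [(hηbd x).1], (hηbd x).2⟩)
  have hmass_compl : (P.map X).real {x | q ≤ η x}ᶜ = 1 - u₀ := by
    rw [probReal_compl_eq_one_sub hC, measureReal_def, hmass_star]
  rw [errSet_eq_of_posterior hX hY hYval hη hC, integral_abs_sub_const_eq hηm hη_int,
    hmass_compl, measureReal_def, hmass_star]
  ring

/-- Closed form of the optimal error under the mass constraint:
`L*_{u₀} = 1 − q + (1−u₀)(2q−1) − E|η(X) − q|` with `q = Q(η, 1−u₀)`. -/
theorem optimal_error_closed_form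
    (P : Measure Ω) [IsProbabilityMeasure P]
    (X : Ω → 𝒳) (Y : Ω → ℝ) (η : 𝒳 → ℝ)
    (hX : Measurable X) (hY : Measurable Y) (hηm : Measurable η)
    (hYval : ∀ ω, Y ω = 1 ∨ Y ω = -1)
    (hηbd : ∀ x, η x ∈ Icc (0 : ℝ) 1)
    (hη : ∀ A : Set 𝒳, MeasurableSet A →
      (P {ω | X ω ∈ A ∧ Y ω = 1}).toReal = ∫ x in A, η x ∂(P.map X))
    (u₀ q : ℝ) (hu₀ : u₀ ∈ Ioo (0 : ℝ) 1)
    (hq : q = quantile (P.map fun ω => η (X ω)) (1 - u₀))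
    (hmass_star : ((P.map X) {x | q ≤ η x}).toReal = u₀) :
    errSet P X Y {x | q ≤ η x} =
      1 - q + (1 - u₀) * (2 * q - 1) - ∫ x, |η x - q| ∂(P.map X) :=
  optimal_error_closed_form_general P X Y η hX hY hηm hYval hηbd hη u₀ q hmass_star

end LocalRanking
end

section
/- The set C*_{u₀} = {x : η(x) ≥ Q(η,1−u₀)} solves the constrained optimization problem: it minimizes P(X ∈ C | Y = −1) over all measurable sets C satisfying P(X ∈ C) ≥ u₀. -/
/-!
Since `P(X ∈ A, Y = -1) = ∫_A (1 - η) dP_X`, this is a Neyman–Pearson (bathtub) argument for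
`f = 1 - η ≥ 0`: the set `C* = {f ≤ 1 - q}` is where `f` is smallest, so trading the part of
`C*` outside `C` for the at least as heavy part of `C` outside `C*` can only increase `∫ f`.
-/

open MeasureTheory Set

namespace LocalRanking

variable {Ω 𝒳 : Type*} [MeasurableSpace Ω] [MeasurableSpace 𝒳]

theorem setIntegral_le_setIntegral_of_measure_le {μ : Measure 𝒳} [IsFiniteMeasure μ]
    {f : 𝒳 → ℝ} {S C : Set 𝒳} {t : ℝ} (hf : Integrable f μ) (hf0 : ∀ x, 0 ≤ f x)
    (hS : MeasurableSet S) (hC : MeasurableSet C)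
    (hfS : ∀ x ∈ S, f x ≤ t) (hfSc : ∀ x ∉ S, t ≤ f x) (hSC : μ S ≤ μ C) :
    ∫ x in S, f x ∂μ ≤ ∫ x in C, f x ∂μ := by
  -- `max t 0` rather than `t`: when `t < 0` the set `S` is empty and only `0 ≤ f` is available.
  set s := max t 0
  have hSC_int : ∫ x in S \ C, f x ∂μ ≤ s * μ.real (S \ C) := by
    calc ∫ x in S \ C, f x ∂μ ≤ ∫ _ in S \ C, s ∂μ :=
          setIntegral_mono_on hf.integrableOn (integrableOn_const (measure_ne_top _ _))
            (hS.diff hC) fun x hx => (hfS x hx.1).trans (le_max_left t 0)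
      _ = s * μ.real (S \ C) := by rw [setIntegral_const, smul_eq_mul, mul_comm]
  have hCS_int : s * μ.real (C \ S) ≤ ∫ x in C \ S, f x ∂μ :=
    setIntegral_ge_of_const_le_real (hC.diff hS) (measure_ne_top _ _)
      (fun x hx => max_le (hfSc x hx.2) (hf0 x)) hf.integrableOn
  have hmass : μ.real (S \ C) ≤ μ.real (C \ S) := by
    have hle : μ.real S ≤ μ.real C := ENNReal.toReal_mono (measure_ne_top _ _) hSC
    have hS_split := measureReal_inter_add_sdiff (μ := μ) (s := S) hC
    have hC_split := measureReal_inter_add_sdiff (μ := μ) (s := C) hS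
    rw [inter_comm] at hC_split
    linarith
  have hS_int := integral_inter_add_sdiff hC (hf.integrableOn (s := S))
  have hC_int := integral_inter_add_sdiff hS (hf.integrableOn (s := C))
  rw [inter_comm] at hC_int
  linarith [mul_le_mul_of_nonneg_left hmass (le_max_right t 0)]

theorem toReal_measure_neg_eq_setIntegral_one_sub (P : Measure Ω) [IsFiniteMeasure P]
    {X : Ω → 𝒳} {Y : Ω → ℝ} {η : 𝒳 → ℝ} (hX : Measurable X) (hY : Measurable Y)
    (hYval : ∀ ω, Y ω = 1 ∨ Y ω = -1) (hηi : Integrable η (P.map X))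
    (hη : ∀ A : Set 𝒳, MeasurableSet A →
      (P {ω | X ω ∈ A ∧ Y ω = 1}).toReal = ∫ x in A, η x ∂(P.map X))
    {A : Set 𝒳} (hA : MeasurableSet A) :
    (P {ω | X ω ∈ A ∧ Y ω = -1}).toReal = ∫ x in A, (1 - η x) ∂(P.map X) := by
  have hsplit : X ⁻¹' A = {ω | X ω ∈ A ∧ Y ω = 1} ∪ {ω | X ω ∈ A ∧ Y ω = -1} := by
    ext ω
    simp only [mem_preimage, mem_union, mem_ofPred_eq]
    rcases hYval ω with h | h <;> simp only [h] <;> tauto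
  have hdisj : Disjoint {ω | X ω ∈ A ∧ Y ω = 1} {ω | X ω ∈ A ∧ Y ω = -1} :=
    disjoint_left.2 fun ω h₁ h₂ => by norm_num [h₁.2] at h₂
  have hneg : MeasurableSet {ω | X ω ∈ A ∧ Y ω = -1} :=
    (hX hA).inter (hY (measurableSet_singleton (-1)))
  rw [integral_sub (integrable_const 1) hηi.integrableOn, setIntegral_const, smul_eq_mul,
    mul_one, ← hη A hA, map_measureReal_apply hX hA, hsplit, measureReal_union hdisj hneg]
  simp only [measureReal_def]
  ring

theorem best_instances_minimum_volume_general
    (P : Measure Ω) [IsProbabilityMeasure P]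
    (X : Ω → 𝒳) (Y : Ω → ℝ) (η : 𝒳 → ℝ)
    (hX : Measurable X) (hY : Measurable Y) (hηm : Measurable η)
    (hYval : ∀ ω, Y ω = 1 ∨ Y ω = -1)
    (hηbd : ∀ x, η x ∈ Icc (0 : ℝ) 1)
    (hη : ∀ A : Set 𝒳, MeasurableSet A →
      (P {ω | X ω ∈ A ∧ Y ω = 1}).toReal = ∫ x in A, η x ∂(P.map X))
    (u₀ q : ℝ)
    (hmass_star : ((P.map X) {x | q ≤ η x}).toReal = u₀) :
    ∀ C : Set 𝒳, MeasurableSet C → u₀ ≤ ((P.map X) C).toReal →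
      (P {ω | X ω ∈ {x | q ≤ η x} ∧ Y ω = -1}).toReal / (P {ω | Y ω = -1}).toReal ≤
        (P {ω | X ω ∈ C ∧ Y ω = -1}).toReal / (P {ω | Y ω = -1}).toReal := by
  intro C hC hCmass
  have : IsProbabilityMeasure (P.map X) := Measure.isProbabilityMeasure_map hX.aemeasurable
  have hηi : Integrable η (P.map X) :=
    Integrable.of_bound hηm.aestronglyMeasurable 1 <| ae_of_all _ fun x => by
      rw [Real.norm_eq_abs, abs_le]
      exact ⟨by linarith [(hηbd x).1], (hηbd x).2⟩
  have hS : MeasurableSet {x | q ≤ η x} := measurableSet_le measurable_const hηm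
  refine div_le_div_of_nonneg_right ?_ ENNReal.toReal_nonneg
  rw [toReal_measure_neg_eq_setIntegral_one_sub P hX hY hYval hηi hη hS,
    toReal_measure_neg_eq_setIntegral_one_sub P hX hY hYval hηi hη hC]
  refine setIntegral_le_setIntegral_of_measure_le (t := 1 - q) ((integrable_const 1).sub hηi)
    (fun x => sub_nonneg.2 (hηbd x).2) hS hC (fun x hx => sub_le_sub_left hx 1)
    (fun x hx => sub_le_sub_left (le_of_not_ge hx) 1) ?_
  exact (ENNReal.toReal_le_toReal (measure_ne_top _ _) (measure_ne_top _ _)).1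
    (hmass_star ▸ hCmass)

/-- `C*_{u₀} = {x : η(x) ≥ Q(η,1−u₀)}` minimizes `P(X ∈ C | Y=−1)`
over all measurable sets `C` with `P(X ∈ C) ≥ u₀`. -/
theorem best_instances_minimum_volume
    (P : Measure Ω) [IsProbabilityMeasure P]
    (X : Ω → 𝒳) (Y : Ω → ℝ) (η : 𝒳 → ℝ)
    (hX : Measurable X) (hY : Measurable Y) (hηm : Measurable η)
    (hYval : ∀ ω, Y ω = 1 ∨ Y ω = -1)
    (hηbd : ∀ x, η x ∈ Icc (0 : ℝ) 1)
    (hη : ∀ A : Set 𝒳, MeasurableSet A →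
      (P {ω | X ω ∈ A ∧ Y ω = 1}).toReal = ∫ x in A, η x ∂(P.map X))
    (p : ℝ) (hp : p = (P {ω | Y ω = 1}).toReal) (hp01 : p ∈ Ioo (0 : ℝ) 1)
    (u₀ q : ℝ) (hu₀ : u₀ ∈ Ioo (0 : ℝ) 1)
    (hq : q = quantile (P.map fun ω => η (X ω)) (1 - u₀))
    (hmass_star : ((P.map X) {x | q ≤ η x}).toReal = u₀) :
    ∀ C : Set 𝒳, MeasurableSet C → u₀ ≤ ((P.map X) C).toReal →
      (P {ω | X ω ∈ {x | q ≤ η x} ∧ Y ω = -1}).toReal / (P {ω | Y ω = -1}).toReal ≤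
        (P {ω | X ω ∈ C ∧ Y ω = -1}).toReal / (P {ω | Y ω = -1}).toReal :=
  best_instances_minimum_volume_general P X Y η hX hY hηm hYval hηbd hη u₀ q hmass_star

end LocalRanking
end

section
/- For any scoring function s and any u ∈ (0,1), the false positive rate at rate u is minimized by the posterior: α(s,u) ≥ α(η,u), where α(s,u) = P(s(X) ≥ Q(s,1−u) | Y=−1). -/
/-!
Write `μ` for the law of `X`. Since `P(X ∈ C, Y = 1) = ∫_C η dμ`, the numerator of `α(s,u)` is
`μ(C_{s,u}) - ∫_{C_{s,u}} η dμ = u - ∫_{C_{s,u}} η dμ`, so it suffices that `C_{η,u}` maximises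
`∫_C η dμ` among sets of mass `u` (bathtub principle). Indeed `C_{η,u}` is the superlevel set
`{η ≥ t}` with `t = Q(η, 1-u)`: passing from `C_{s,u}` to `C_{η,u}` trades `C_{s,u} \ C_{η,u}`,
where `η < t`, for `C_{η,u} \ C_{s,u}`, of the same mass, where `η ≥ t`.
-/

open MeasureTheory Set

namespace LocalRanking

variable {Ω 𝒳 : Type*} [MeasurableSpace Ω] [MeasurableSpace 𝒳]

/-- The set `C_{s,u} = {x : s(x) ≥ Q(s, 1−u)}` of top instances at rate `u` for score `s`. -/
noncomputable def topSet (P : Measure Ω) (X : Ω → 𝒳) (s : 𝒳 → ℝ) (u : ℝ) : Set 𝒳 :=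
  {x | quantile (P.map fun ω => s (X ω)) (1 - u) ≤ s x}

/-- True positive rate `β(s,u) = P(X ∈ C_{s,u} | Y=+1)`. -/
noncomputable def betaS (P : Measure Ω) (X : Ω → 𝒳) (Y : Ω → ℝ) (s : 𝒳 → ℝ) (u : ℝ) : ℝ :=
  (P {ω | X ω ∈ topSet P X s u ∧ Y ω = 1}).toReal / (P {ω | Y ω = 1}).toReal

/-- False positive rate `α(s,u) = P(X ∈ C_{s,u} | Y=−1)`. -/
noncomputable def alphaS (P : Measure Ω) (X : Ω → 𝒳) (Y : Ω → ℝ) (s : 𝒳 → ℝ) (u : ℝ) : ℝ :=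
  (P {ω | X ω ∈ topSet P X s u ∧ Y ω = -1}).toReal / (P {ω | Y ω = -1}).toReal

theorem measurableSet_topSet (P : Measure Ω) (X : Ω → 𝒳) {s : 𝒳 → ℝ} (hs : Measurable s)
    (u : ℝ) : MeasurableSet (topSet P X s u) :=
  measurableSet_le measurable_const hs

theorem setIntegral_le_setIntegral_of_measure_eq {α : Type*} [MeasurableSpace α]
    {μ : Measure α} {f : α → ℝ} (hf : Integrable f μ) {A B : Set α} (hA : MeasurableSet A)
    (hB : MeasurableSet B) (hAB : μ A = μ B) (hμA : μ A ≠ ⊤) {t : ℝ}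
    (hB_ge : ∀ x ∈ B, t ≤ f x) (hBc_le : ∀ x ∉ B, f x ≤ t) :
    ∫ x in A, f x ∂μ ≤ ∫ x in B, f x ∂μ := by
  have hdiff : μ.real (A \ B) = μ.real (B \ A) := by
    rw [measureReal_def, measureReal_def, measure_sdiff_symm hA.nullMeasurableSet
      hB.nullMeasurableSet hAB (measure_ne_top_of_subset inter_subset_left hμA)]
  have hAB_le : ∫ x in A \ B, f x ∂μ ≤ t * μ.real (B \ A) := by
    calc ∫ x in A \ B, f x ∂μ ≤ ∫ _ in A \ B, t ∂μ :=
          setIntegral_mono_on hf.integrableOn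
            (integrableOn_const (measure_ne_top_of_subset sdiff_subset hμA)) (hA.diff hB)
            fun x hx => hBc_le x hx.2
      _ = t * μ.real (B \ A) := by rw [setIntegral_const, smul_eq_mul, mul_comm, hdiff]
  have hBA_ge : t * μ.real (B \ A) ≤ ∫ x in B \ A, f x ∂μ :=
    setIntegral_ge_of_const_le_real (hB.diff hA)
      (measure_ne_top_of_subset sdiff_subset (hAB ▸ hμA)) (fun x hx => hB_ge x hx.1)
      hf.integrableOn
  calc ∫ x in A, f x ∂μ = ∫ x in A ∩ B, f x ∂μ + ∫ x in A \ B, f x ∂μ :=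
        (integral_inter_add_sdiff hB hf.integrableOn).symm
    _ ≤ ∫ x in B ∩ A, f x ∂μ + ∫ x in B \ A, f x ∂μ := by
        rw [inter_comm]; exact add_le_add_right (hAB_le.trans hBA_ge) _
    _ = ∫ x in B, f x ∂μ := integral_inter_add_sdiff hA hf.integrableOn

theorem toReal_measure_label_neg_eq_sub (P : Measure Ω) [IsFiniteMeasure P] {X : Ω → 𝒳}
    {Y : Ω → ℝ} (hX : Measurable X) (hY : Measurable Y) (hYval : ∀ ω, Y ω = 1 ∨ Y ω = -1)
    {C : Set 𝒳} (hC : MeasurableSet C) :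
    (P {ω | X ω ∈ C ∧ Y ω = -1}).toReal
      = ((P.map X) C).toReal - (P {ω | X ω ∈ C ∧ Y ω = 1}).toReal := by
  have hneg : {ω | X ω ∈ C ∧ Y ω = -1} = X ⁻¹' C \ Y ⁻¹' {1} := by
    ext ω
    rcases hYval ω with h | h <;> norm_num [h]
  rw [Measure.map_apply hX hC,
    ← measure_inter_add_sdiff (X ⁻¹' C) (hY (measurableSet_singleton 1)), hneg,
    ENNReal.toReal_add (measure_ne_top _ _) (measure_ne_top _ _)]
  exact (add_sub_cancel_left _ _).symm

theorem posterior_minimizes_false_positive_rate_general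
    (P : Measure Ω) [IsProbabilityMeasure P]
    (X : Ω → 𝒳) (Y : Ω → ℝ) (η : 𝒳 → ℝ)
    (hX : Measurable X) (hY : Measurable Y) (hηm : Measurable η)
    (hYval : ∀ ω, Y ω = 1 ∨ Y ω = -1)
    (hηbd : ∀ x, η x ∈ Icc (0 : ℝ) 1)
    (hη : ∀ A : Set 𝒳, MeasurableSet A →
      (P {ω | X ω ∈ A ∧ Y ω = 1}).toReal = ∫ x in A, η x ∂(P.map X))
    (u : ℝ)
    (s : 𝒳 → ℝ) (hs : Measurable s)
    (hmass_s : ((P.map X) (topSet P X s u)).toReal = u)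
    (hmass_η : ((P.map X) (topSet P X η u)).toReal = u) :
    alphaS P X Y η u ≤ alphaS P X Y s u := by
  have hCs := measurableSet_topSet P X hs u
  have hCη := measurableSet_topSet P X hηm u
  have hη_int : Integrable η (P.map X) :=
    .of_bound hηm.aestronglyMeasurable 1 (ae_of_all _ fun x =>
      abs_le.mpr ⟨by linarith [(hηbd x).1], (hηbd x).2⟩)
  have hmass : (P.map X) (topSet P X s u) = (P.map X) (topSet P X η u) :=
    (ENNReal.toReal_eq_toReal_iff' (measure_ne_top _ _) (measure_ne_top _ _)).mp
      (hmass_s.trans hmass_η.symm)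
  -- The top set of `η` is the superlevel set `{η ≥ Q(η, 1-u)}`.
  have hkey : ∫ x in topSet P X s u, η x ∂(P.map X) ≤ ∫ x in topSet P X η u, η x ∂(P.map X) :=
    setIntegral_le_setIntegral_of_measure_eq hη_int hCs hCη hmass (measure_ne_top _ _)
      (fun _ hx => hx) (fun _ hx => (not_le.mp hx).le)
  unfold alphaS
  gcongr ?_ / _
  rw [toReal_measure_label_neg_eq_sub P hX hY hYval hCη,
    toReal_measure_label_neg_eq_sub P hX hY hYval hCs, hη _ hCη, hη _ hCs, hmass_s, hmass_η]
  linarith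

/-- The false positive rate at rate `u` is minimized by the posterior:
`α(s,u) ≥ α(η,u)`. -/
theorem posterior_minimizes_false_positive_rate
    (P : Measure Ω) [IsProbabilityMeasure P]
    (X : Ω → 𝒳) (Y : Ω → ℝ) (η : 𝒳 → ℝ)
    (hX : Measurable X) (hY : Measurable Y) (hηm : Measurable η)
    (hYval : ∀ ω, Y ω = 1 ∨ Y ω = -1)
    (hηbd : ∀ x, η x ∈ Icc (0 : ℝ) 1)
    (hη : ∀ A : Set 𝒳, MeasurableSet A →
      (P {ω | X ω ∈ A ∧ Y ω = 1}).toReal = ∫ x in A, η x ∂(P.map X))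
    (p : ℝ) (hp : p = (P {ω | Y ω = 1}).toReal) (hp01 : p ∈ Ioo (0 : ℝ) 1)
    (u : ℝ) (hu : u ∈ Ioo (0 : ℝ) 1)
    (s : 𝒳 → ℝ) (hs : Measurable s)
    (hmass_s : ((P.map X) (topSet P X s u)).toReal = u)
    (hmass_η : ((P.map X) (topSet P X η u)).toReal = u) :
    alphaS P X Y η u ≤ alphaS P X Y s u :=
  posterior_minimizes_false_positive_rate_general P X Y η hX hY hηm hYval hηbd hη u s hs hmass_s
    hmass_η

end LocalRanking
end

section
/- The local AUC criterion satisfies the decomposition LocAUC(s, u₀) = β(s,u₀) − R(s,u₀)/(2p(1−p)), where R(s,u₀) = P((s(X)−s(X'))(Y−Y') < 0, (X,X') ∈ C_{s,u₀}²) is the local ranking error restricted to the top set. -/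
open MeasureTheory Set

namespace LocalRanking

variable {Ω 𝒳 : Type*} [MeasurableSpace Ω] [MeasurableSpace 𝒳]

/-- Local AUC: `P(s(X) > s(X'), s(X) ≥ q | Y=1, Y'=−1)`, for `(X,Y), (X',Y')`
i.i.d. and `P(Y=1, Y'=−1) = p(1−p)`. -/
noncomputable def locAUC (P : Measure Ω) (X X' : Ω → 𝒳) (Y Y' : Ω → ℝ)
    (s : 𝒳 → ℝ) (q p : ℝ) : ℝ :=
  (P {ω | s (X' ω) < s (X ω) ∧ q ≤ s (X ω) ∧ Y ω = 1 ∧ Y' ω = -1}).toReal / (p * (1 - p))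

/-- Local ranking error `R(s,u₀) = P((s(X)−s(X'))(Y−Y') < 0, (X,X') ∈ C_{s,u₀}²)`
where `C_{s,u₀} = {x : s(x) ≥ q}`. -/
noncomputable def locRank (P : Measure Ω) (X X' : Ω → 𝒳) (Y Y' : Ω → ℝ)
    (s : 𝒳 → ℝ) (q : ℝ) : ℝ :=
  (P {ω | (s (X ω) - s (X' ω)) * (Y ω - Y' ω) < 0 ∧ q ≤ s (X ω) ∧ q ≤ s (X' ω)}).toReal

/-- The local AUC decomposes as
`LocAUC(s, u₀) = β(s,u₀) − R(s,u₀)/(2p(1−p))`. -/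
theorem locAUC_decomposition
    (P : Measure Ω) [IsProbabilityMeasure P]
    (X X' : Ω → 𝒳) (Y Y' : Ω → ℝ)
    (hX : Measurable X) (hY : Measurable Y) (hX' : Measurable X') (hY' : Measurable Y')
    (hYval : ∀ ω, Y ω = 1 ∨ Y ω = -1)
    -- (X,Y) and (X',Y') are i.i.d.
    (hindep : ProbabilityTheory.IndepFun (fun ω => (X ω, Y ω)) (fun ω => (X' ω, Y' ω)) P)
    (hid : ProbabilityTheory.IdentDistrib (fun ω => (X ω, Y ω)) (fun ω => (X' ω, Y' ω)) P P)
    (p : ℝ) (hp : p = (P {ω | Y ω = 1}).toReal) (hp01 : p ∈ Ioo (0 : ℝ) 1)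
    (u₀ q : ℝ) (hu₀ : u₀ ∈ Ioo (0 : ℝ) 1)
    (s : 𝒳 → ℝ) (hs : Measurable s)
    (hq : q = quantile (P.map fun ω => s (X ω)) (1 - u₀))
    (hmass : (P {ω | q ≤ s (X ω)}).toReal = u₀)
    -- continuous score distribution: no ties
    (hties : P {ω | s (X ω) = s (X' ω)} = 0) :
    locAUC P X X' Y Y' s q p =
      (P {ω | q ≤ s (X ω) ∧ Y ω = 1}).toReal / p
        - locRank P X X' Y Y' s q / (2 * p * (1 - p)) := by
  obtain ⟨hp0, hp1⟩ := hp01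
  have hf : Measurable fun ω => s (X ω) := hs.comp hX
  have hf' : Measurable fun ω => s (X' ω) := hs.comp hX'
  have hZ : Measurable fun ω => (X ω, Y ω) := hX.prodMk hY
  have hZ' : Measurable fun ω => (X' ω, Y' ω) := hX'.prodMk hY'
  -- events
  set A : Set Ω := {ω | s (X' ω) < s (X ω) ∧ q ≤ s (X ω) ∧ Y ω = 1 ∧ Y' ω = -1} with hA
  set B : Set Ω := {ω | q ≤ s (X ω) ∧ Y ω = 1 ∧ Y' ω = -1} with hB
  set E1 : Set Ω :=
    {ω | s (X ω) < s (X' ω) ∧ q ≤ s (X ω) ∧ q ≤ s (X' ω) ∧ Y ω = 1 ∧ Y' ω = -1} with hE1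
  set E2 : Set Ω :=
    {ω | s (X' ω) < s (X ω) ∧ q ≤ s (X' ω) ∧ q ≤ s (X ω) ∧ Y' ω = 1 ∧ Y ω = -1} with hE2
  set Rev : Set Ω :=
    {ω | (s (X ω) - s (X' ω)) * (Y ω - Y' ω) < 0 ∧ q ≤ s (X ω) ∧ q ≤ s (X' ω)} with hRev
  -- measurability
  have hm1 : MeasurableSet {ω | q ≤ s (X ω)} := measurableSet_le measurable_const hf
  have hm1' : MeasurableSet {ω | q ≤ s (X' ω)} := measurableSet_le measurable_const hf'
  have hmy1 : MeasurableSet {ω | Y ω = 1} := hY (measurableSet_singleton 1)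
  have hmyn : MeasurableSet {ω | Y ω = -1} := hY (measurableSet_singleton (-1))
  have hmy1' : MeasurableSet {ω | Y' ω = 1} := hY' (measurableSet_singleton 1)
  have hmyn' : MeasurableSet {ω | Y' ω = -1} := hY' (measurableSet_singleton (-1))
  have hlt : MeasurableSet {ω | s (X ω) < s (X' ω)} := measurableSet_lt hf hf'
  have hlt' : MeasurableSet {ω | s (X' ω) < s (X ω)} := measurableSet_lt hf' hf
  have mE1 : MeasurableSet E1 :=
    hlt.inter (hm1.inter (hm1'.inter (hmy1.inter hmyn')))
  have mE2 : MeasurableSet E2 :=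
    hlt'.inter (hm1'.inter (hm1.inter (hmy1'.inter hmyn)))
  -- Y' a.e. ±1
  have hidY : ProbabilityTheory.IdentDistrib Y Y' P P := hid.comp measurable_snd
  have hN' : P {ω | ¬(Y' ω = 1 ∨ Y' ω = -1)} = 0 := by
    have hmS : MeasurableSet {y : ℝ | ¬(y = 1 ∨ y = -1)} := by
      have : {y : ℝ | ¬(y = 1 ∨ y = -1)} = ({1}ᶜ ∩ {-1}ᶜ : Set ℝ) := by
        ext y; simp [not_or]
      rw [this]
      exact (measurableSet_singleton 1).compl.inter (measurableSet_singleton (-1)).compl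
    have heq := hidY.measure_mem_eq hmS
    have h0 : (Y ⁻¹' {y : ℝ | ¬(y = 1 ∨ y = -1)}) = ∅ := by
      ext ω; simp only [mem_preimage, mem_setOf_eq, mem_empty_iff_false, iff_false, not_not]
      exact hYval ω
    have : P (Y' ⁻¹' {y : ℝ | ¬(y = 1 ∨ y = -1)}) = 0 := by
      rw [← heq, h0, measure_empty]
    exact this
  -- P B = P A + P E1
  have hsub1 : A ∪ E1 ⊆ B := by
    rintro ω (⟨h1, h2, h3, h4⟩ | ⟨h1, h2, h2', h3, h4⟩) <;> exact ⟨h2, h3, h4⟩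
  have hsub2 : B ⊆ (A ∪ E1) ∪ {ω | s (X ω) = s (X' ω)} := by
    rintro ω ⟨h2, h3, h4⟩
    rcases lt_trichotomy (s (X ω)) (s (X' ω)) with h | h | h
    · exact Or.inl (Or.inr ⟨h, h2, h2.trans h.le, h3, h4⟩)
    · exact Or.inr h
    · exact Or.inl (Or.inl ⟨h, h2, h3, h4⟩)
  have hdisj1 : Disjoint A E1 := by
    rw [Set.disjoint_left]
    rintro ω ⟨h1, -⟩ ⟨h1', -⟩
    exact absurd h1' (not_lt.mpr h1.le)
  have hPB : P B = P A + P E1 := by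
    rw [← measure_union hdisj1 mE1]
    refine le_antisymm ?_ (measure_mono hsub1)
    calc P B ≤ P ((A ∪ E1) ∪ {ω | s (X ω) = s (X' ω)}) := measure_mono hsub2
      _ ≤ P (A ∪ E1) + P {ω | s (X ω) = s (X' ω)} := measure_union_le _ _
      _ = P (A ∪ E1) := by rw [hties, add_zero]
  -- P Rev = P E1 + P E2
  have hsub3 : E1 ∪ E2 ⊆ Rev := by
    rintro ω (⟨h1, h2, h2', h3, h4⟩ | ⟨h1, h2, h2', h3, h4⟩)
    · refine ⟨?_, h2, h2'⟩; rw [h3, h4]; nlinarith [h1]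
    · refine ⟨?_, h2', h2⟩; rw [h3, h4]; nlinarith [h1]
  have hsub4 : Rev ⊆ (E1 ∪ E2) ∪ {ω | ¬(Y' ω = 1 ∨ Y' ω = -1)} := by
    rintro ω ⟨h0, h1, h2⟩
    by_cases hY'ω : Y' ω = 1 ∨ Y' ω = -1
    · rcases hYval ω with hy | hy <;> rcases hY'ω with hy' | hy'
      · exfalso; rw [hy, hy'] at h0; norm_num at h0
      · exact Or.inl (Or.inl ⟨by rw [hy, hy'] at h0; nlinarith [h0], h1, h2, hy, hy'⟩)
      · exact Or.inl (Or.inr ⟨by rw [hy, hy'] at h0; nlinarith [h0], h2, h1, hy', hy⟩)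
      · exfalso; rw [hy, hy'] at h0; norm_num at h0
    · exact Or.inr hY'ω
  have hdisj2 : Disjoint E1 E2 := by
    rw [Set.disjoint_left]
    rintro ω ⟨-, -, -, hy, -⟩ ⟨-, -, -, -, hy'⟩
    rw [hy] at hy'; norm_num at hy'
  have hPR : P Rev = P E1 + P E2 := by
    rw [← measure_union hdisj2 mE2]
    refine le_antisymm ?_ (measure_mono hsub3)
    calc P Rev ≤ P ((E1 ∪ E2) ∪ {ω | ¬(Y' ω = 1 ∨ Y' ω = -1)}) := measure_mono hsub4
      _ ≤ P (E1 ∪ E2) + P {ω | ¬(Y' ω = 1 ∨ Y' ω = -1)} := measure_union_le _ _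
      _ = P (E1 ∪ E2) := by rw [hN', add_zero]
  -- exchangeability : P E1 = P E2
  have hmap : P.map (fun ω => ((X ω, Y ω), (X' ω, Y' ω)))
      = P.map (fun ω => ((X' ω, Y' ω), (X ω, Y ω))) := by
    rw [(ProbabilityTheory.indepFun_iff_map_prod_eq_prod_map_map hZ.aemeasurable
        hZ'.aemeasurable).mp hindep,
      (ProbabilityTheory.indepFun_iff_map_prod_eq_prod_map_map hZ'.aemeasurable
        hZ.aemeasurable).mp hindep.symm, hid.map_eq]
  have hE : P E1 = P E2 := by
    set S : Set ((𝒳 × ℝ) × (𝒳 × ℝ)) :=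
      {z | s z.1.1 < s z.2.1 ∧ q ≤ s z.1.1 ∧ q ≤ s z.2.1 ∧ z.1.2 = 1 ∧ z.2.2 = -1} with hS
    have m1 : Measurable fun z : (𝒳 × ℝ) × (𝒳 × ℝ) => s z.1.1 :=
      hs.comp measurable_fst.fst
    have m2 : Measurable fun z : (𝒳 × ℝ) × (𝒳 × ℝ) => s z.2.1 :=
      hs.comp measurable_snd.fst
    have my1 : Measurable fun z : (𝒳 × ℝ) × (𝒳 × ℝ) => z.1.2 := measurable_fst.snd
    have my2 : Measurable fun z : (𝒳 × ℝ) × (𝒳 × ℝ) => z.2.2 := measurable_snd.snd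
    have hSm : MeasurableSet S :=
      (measurableSet_lt m1 m2).inter ((measurableSet_le measurable_const m1).inter
        ((measurableSet_le measurable_const m2).inter
          ((my1 (measurableSet_singleton 1)).inter (my2 (measurableSet_singleton (-1))))))
    have hE1pre : E1 = (fun ω => ((X ω, Y ω), (X' ω, Y' ω))) ⁻¹' S := rfl
    have hE2pre : E2 = (fun ω => ((X' ω, Y' ω), (X ω, Y ω))) ⁻¹' S := rfl
    rw [hE1pre, hE2pre, ← Measure.map_apply (hZ.prodMk hZ') hSm,
      ← Measure.map_apply (hZ'.prodMk hZ) hSm, hmap]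
  -- independence : P B = P {q ≤ sX ∧ Y = 1} * P {Y' = -1}
  have hBprod : P B = P {ω | q ≤ s (X ω) ∧ Y ω = 1} * P {ω | Y' ω = -1} := by
    have hmt1 : MeasurableSet {z : 𝒳 × ℝ | q ≤ s z.1 ∧ z.2 = 1} :=
      (measurableSet_le measurable_const (hs.comp measurable_fst)).inter
        (measurable_snd (measurableSet_singleton 1))
    have hmt2 : MeasurableSet {z : 𝒳 × ℝ | z.2 = -1} :=
      measurable_snd (measurableSet_singleton (-1))
    have key := hindep.measure_inter_preimage_eq_mul _ _ hmt1 hmt2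
    have hBeq : B = (fun ω => (X ω, Y ω)) ⁻¹' {z : 𝒳 × ℝ | q ≤ s z.1 ∧ z.2 = 1}
        ∩ (fun ω => (X' ω, Y' ω)) ⁻¹' {z : 𝒳 × ℝ | z.2 = -1} := by
      ext ω
      simp only [hB, mem_setOf_eq, mem_inter_iff, mem_preimage, and_assoc]
    rw [hBeq, key]
    rfl
  -- P {Y' = -1} has toReal 1 - p
  have hYneg : (P {ω | Y' ω = -1}).toReal = 1 - p := by
    have h1 : P {ω | Y' ω = -1} = P {ω | Y ω = -1} :=
      (hidY.measure_mem_eq (measurableSet_singleton (-1))).symm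
    have hu : ({ω | Y ω = 1} ∪ {ω | Y ω = -1}) = (univ : Set Ω) := by
      ext ω; simpa using hYval ω
    have hd : Disjoint {ω | Y ω = 1} {ω | Y ω = -1} := by
      rw [Set.disjoint_left]
      rintro ω h1 h2
      simp only [mem_setOf_eq] at h1 h2
      rw [h1] at h2; norm_num at h2
    have hsum : P {ω | Y ω = 1} + P {ω | Y ω = -1} = 1 := by
      rw [← measure_union hd hmyn, hu, measure_univ]
    have hsum' : (P {ω | Y ω = 1}).toReal + (P {ω | Y ω = -1}).toReal = 1 := by
      rw [← ENNReal.toReal_add (measure_ne_top P _) (measure_ne_top P _), hsum]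
      rfl
    rw [h1]
    rw [hp] at *
    linarith
  -- now real arithmetic
  have ha : (P A).toReal + (P E1).toReal = (P B).toReal := by
    rw [hPB, ENNReal.toReal_add (measure_ne_top P _) (measure_ne_top P _)]
  have hr : (P Rev).toReal = (P E1).toReal + (P E2).toReal := by
    rw [hPR, ENNReal.toReal_add (measure_ne_top P _) (measure_ne_top P _)]
  have hEr : (P E1).toReal = (P E2).toReal := by rw [hE]
  have hb : (P B).toReal = (P {ω | q ≤ s (X ω) ∧ Y ω = 1}).toReal * (1 - p) := by
    rw [hBprod, ENNReal.toReal_mul, hYneg]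
  unfold locAUC locRank
  rw [← hA, ← hRev]
  have hpne : p ≠ 0 := ne_of_gt hp0
  have hpne1 : 1 - p ≠ 0 := by intro h; apply absurd hp1; linarith
  set β := (P {ω | q ≤ s (X ω) ∧ Y ω = 1}).toReal
  have haval : (P A).toReal = β * (1 - p) - (P E1).toReal := by
    rw [← hb] at *; linarith
  have hrval : (P Rev).toReal = 2 * (P E1).toReal := by rw [hr, hEr]; ring
  rw [haval, hrval]
  field_simp

end LocalRanking
end
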